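/- arXiv:2210.04229 — 4 statements merged into one kernel-verified Lean document; each statement's English description precedes it below -/
import Mathlib

section
/- Let G = (V, E) be a finite undirected graph with positive vertex weights w : V → ℝ₊, and for each vertex i let C(i) = N(i) ∪ {i} denote the closed neighborhood of i. Then the sum over all vertices i of w(i)/|C(i)| is at most the weighted independence number α_w(G, w), i.e., the maximum of ∑_{i∈S} w(i) over all independent sets S of G. -/
open Finset

lemma caro_wei_aux {V : Type*} [Fintype V] [DecidableEq V]
    (G : SimpleGraph V) [DecidableRel G.Adj] (w : V → ℝ) (hw : ∀ i, 0 < w i) :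
    ∀ n (T : Finset V), T.card = n →
    ∃ S : Finset V, S ⊆ T ∧ (∀ i ∈ S, ∀ j ∈ S, i ≠ j → ¬ G.Adj i j) ∧
      ∑ i ∈ T, w i / ((((insert i (G.neighborFinset i)) ∩ T).card : ℝ)) ≤ ∑ i ∈ S, w i := by
  intro n
  induction n using Nat.strong_induction_on with
  | _ n ih =>
  intro T hT
  rcases T.eq_empty_or_nonempty with rfl | hne
  · exact ⟨∅, Finset.Subset.refl _, by simp, by simp⟩
  · obtain ⟨v, hvT, hmax⟩ := T.exists_max_image
      (fun i => w i / (((insert i (G.neighborFinset i)) ∩ T).card : ℝ)) hne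
    set Cv : Finset V := (insert v (G.neighborFinset v)) ∩ T with hCv
    have hvCv : v ∈ Cv := by simp [hCv, hvT]
    have hCvT : Cv ⊆ T := inter_subset_right
    set T' : Finset V := T \ Cv with hT'
    have hT'card : T'.card < n := by
      rw [← hT]
      exact card_lt_card (ssubset_iff_of_subset (sdiff_subset)
        |>.mpr ⟨v, by simp [hT', hvCv, hvT]⟩)
    obtain ⟨S', hS'T', hS'ind, hS'sum⟩ := ih T'.card hT'card T' rfl
    have hvS' : v ∉ S' := fun h => by
      have := hS'T' h; simp [hT', hvCv] at this
    refine ⟨insert v S', ?_, ?_, ?_⟩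
    · intro x hx
      rcases mem_insert.mp hx with rfl | hx
      · exact hvT
      · exact sdiff_subset (hS'T' hx)
    · intro i hi j hj hij
      rcases mem_insert.mp hi with rfl | hi' <;> rcases mem_insert.mp hj with rfl | hj'
      · exact absurd rfl hij
      · intro hadj
        have hjCv : j ∈ Cv := by
          have hjT : j ∈ T := (sdiff_subset : T' ⊆ T) (hS'T' hj')
          simp [hCv, SimpleGraph.mem_neighborFinset, hadj, hjT]
        have := hS'T' hj'; rw [hT', mem_sdiff] at this; exact this.2 hjCv
      · intro hadj
        have hiCv : i ∈ Cv := by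
          have hiT : i ∈ T := (sdiff_subset : T' ⊆ T) (hS'T' hi')
          simp [hCv, SimpleGraph.mem_neighborFinset, hadj.symm, hiT]
        have := hS'T' hi'; rw [hT', mem_sdiff] at this; exact this.2 hiCv
      · exact hS'ind i hi' j hj' hij
    · have hsplit : ∑ i ∈ T', w i / ((((insert i (G.neighborFinset i)) ∩ T).card : ℝ))
          + ∑ i ∈ Cv, w i / ((((insert i (G.neighborFinset i)) ∩ T).card : ℝ))
          = ∑ i ∈ T, w i / ((((insert i (G.neighborFinset i)) ∩ T).card : ℝ)) :=
        sum_sdiff hCvT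
      rw [sum_insert hvS']
      have hCvpos : (0 : ℝ) < (Cv.card : ℝ) := by
        exact_mod_cast card_pos.mpr ⟨v, hvCv⟩
      have h1 : ∑ i ∈ Cv, w i / ((((insert i (G.neighborFinset i)) ∩ T).card : ℝ)) ≤ w v := by
        calc ∑ i ∈ Cv, w i / ((((insert i (G.neighborFinset i)) ∩ T).card : ℝ))
            ≤ ∑ _i ∈ Cv, w v / (Cv.card : ℝ) := by
              refine sum_le_sum fun i hi => hmax i (hCvT hi)
          _ = w v := by
              rw [sum_const, nsmul_eq_mul]
              field_simp
      have h2 : ∑ i ∈ T', w i / ((((insert i (G.neighborFinset i)) ∩ T).card : ℝ))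
          ≤ ∑ i ∈ S', w i := by
        refine le_trans (sum_le_sum fun i hi => ?_) hS'sum
        have hiT' : i ∈ (insert i (G.neighborFinset i)) ∩ T' := by
          simp [hi]
        have hsub : (insert i (G.neighborFinset i)) ∩ T' ⊆
            (insert i (G.neighborFinset i)) ∩ T :=
          inter_subset_inter (Finset.Subset.refl _) sdiff_subset
        have hpos : (0 : ℝ) < (((insert i (G.neighborFinset i)) ∩ T').card : ℝ) := by
          exact_mod_cast card_pos.mpr ⟨i, hiT'⟩
        exact div_le_div_of_nonneg_left (hw i).le hpos (by exact_mod_cast card_le_card hsub)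
      linarith [hsplit, h1, h2]

/-- the sum over vertices of w(i)/|C(i)| is at most the weighted
independence number, expressed as: there exists an independent set whose total
weight is at least the sum. -/
theorem stmt_0 {V : Type*} [Fintype V] [DecidableEq V]
    (G : SimpleGraph V) [DecidableRel G.Adj] (w : V → ℝ) (hw : ∀ i, 0 < w i) :
    ∃ S : Finset V,
      (∀ i ∈ S, ∀ j ∈ S, i ≠ j → ¬ G.Adj i j) ∧
      ∑ i : V, w i / ((insert i (G.neighborFinset i)).card : ℝ) ≤ ∑ i ∈ S, w i := by
  obtain ⟨S, _, hind, hsum⟩ := caro_wei_aux G w hw (Finset.univ.card) Finset.univ rfl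
  refine ⟨S, hind, ?_⟩
  simpa using hsum
end

section
/- Let a₁, …, a_T be nonnegative reals. Then ∑_{t=1}^T a_t / √(1 + ∑_{s<t} a_s) ≤ 3·√(∑_{t=1}^T a_t) + max_{t ≤ T} a_t. -/
open Finset

/-!
With `m = max_t a_t` and `A_t = ∑_{s<t} a_s`, each summand is dominated by the increment of the
potential `Φ(x) = 2√x - m/√x` from `1 + A_t` to `1 + A_{t+1}`: for `0 ≤ c ≤ m` one has
`c/√(x+c) ≤ 2(√(x+c) - √x)` and `c/√x - c/√(x+c) ≤ m/√x - m/√(x+c)`. The sum therefore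
telescopes to at most `Φ(1 + A) - Φ(1) ≤ 2√(1 + A) - 2 + m ≤ 2√A + m`.
-/

noncomputable def potential (m x : ℝ) : ℝ := 2 * √x - m / √x

lemma div_sqrt_le_potential_sub {x c m : ℝ} (hx : 0 < x) (hc : 0 ≤ c) (hcm : c ≤ m) :
    c / √x ≤ potential m (x + c) - potential m x := by
  have hu : 0 < √x := Real.sqrt_pos.mpr hx
  have hv : 0 < √(x + c) := Real.sqrt_pos.mpr (by linarith)
  have huv : √x ≤ √(x + c) := Real.sqrt_le_sqrt (by linarith)
  have hv2 : √(x + c) ^ 2 = x + c := Real.sq_sqrt (by linarith)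
  have hu2 : √x ^ 2 = x := Real.sq_sqrt hx.le
  -- `c = (√(x + c) - √x)(√(x + c) + √x)` and `√(x + c) + √x ≤ 2√(x + c)`
  have hsqrt_part : c / √(x + c) ≤ 2 * (√(x + c) - √x) := by
    rw [div_le_iff₀ hv]
    nlinarith [sq_nonneg (√x - √(x + c))]
  have hdiv_part : c * (1 / √x - 1 / √(x + c)) ≤ m * (1 / √x - 1 / √(x + c)) :=
    mul_le_mul_of_nonneg_right hcm (sub_nonneg.mpr (one_div_le_one_div_of_le hu huv))
  unfold potential
  linarith [mul_one_div c √x, mul_one_div c √(x + c), mul_one_div m √x, mul_one_div m √(x + c)]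

lemma sqrt_one_add_le_one_add_sqrt {x : ℝ} (hx : 0 ≤ x) : √(1 + x) ≤ 1 + √x := by
  rw [Real.sqrt_le_left (by positivity)]
  nlinarith [Real.sq_sqrt hx, Real.sqrt_nonneg x]

theorem sum_range_div_sqrt_one_add_partialSum_le (b : ℕ → ℝ) {m : ℝ} (hb : ∀ i, 0 ≤ b i)
    (hbm : ∀ i, b i ≤ m) (n : ℕ) :
    ∑ i ∈ range n, b i / √(1 + ∑ j ∈ range i, b j) ≤ 2 * √(∑ i ∈ range n, b i) + m := by
  set S : ℕ → ℝ := fun k => ∑ j ∈ range k, b j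
  have hS : ∀ k, 0 ≤ S k := fun k => sum_nonneg fun j _ => hb j
  have htelescope : ∑ i ∈ range n, b i / √(1 + S i) ≤
      potential m (1 + S n) - potential m (1 + S 0) := by
    rw [← sum_range_sub (fun k => potential m (1 + S k))]
    refine sum_le_sum fun i _ => ?_
    have hstep := div_sqrt_le_potential_sub (x := 1 + S i) (by linarith [hS i]) (hb i) (hbm i)
    rwa [add_assoc, ← sum_range_succ] at hstep
  have hpos : 0 < √(1 + S n) := Real.sqrt_pos.mpr (by linarith [hS n])
  have hdiv : 0 ≤ m / √(1 + S n) := div_nonneg ((hb 0).trans (hbm 0)) hpos.le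
  have hsqrt := sqrt_one_add_le_one_add_sqrt (hS n)
  simp only [potential, S, sum_range_zero, add_zero, Real.sqrt_one, div_one] at htelescope hsqrt ⊢
  linarith

def zeroExtend {M : Type*} [Zero M] {T : ℕ} (a : Fin T → M) (i : ℕ) : M :=
  if h : i < T then a ⟨i, h⟩ else 0

lemma zeroExtend_val {M : Type*} [Zero M] {T : ℕ} (a : Fin T → M) (t : Fin T) :
    zeroExtend a t = a t := by
  simp [zeroExtend]

lemma sum_univ_eq_sum_range_zeroExtend {M : Type*} [AddCommMonoid M] {T : ℕ} (a : Fin T → M) :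
    ∑ t, a t = ∑ i ∈ range T, zeroExtend a i :=
  sum_fin_eq_sum_range a

lemma sum_filter_lt_eq_sum_range_zeroExtend {M : Type*} [AddCommMonoid M] {T : ℕ}
    (a : Fin T → M) (t : Fin T) :
    ∑ s ∈ univ.filter (· < t), a s = ∑ i ∈ range t, zeroExtend a i := by
  rw [← Nat.Iio_eq_range, ← Fin.map_valEmbedding_Iio, sum_map, filter_gt_eq_Iio]
  exact sum_congr rfl fun s _ => (zeroExtend_val a s).symm

theorem stmt_8 (T : ℕ) (hT : 0 < T) (a : Fin T → ℝ) (ha : ∀ t, 0 ≤ a t) :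
    ∑ t : Fin T, a t / Real.sqrt (1 + ∑ s ∈ Finset.univ.filter (fun s => s < t), a s) ≤
      3 * Real.sqrt (∑ t : Fin T, a t) +
        Finset.univ.sup' ⟨⟨0, hT⟩, Finset.mem_univ _⟩ a := by
  set m := univ.sup' ⟨⟨0, hT⟩, mem_univ _⟩ a
  have ham : ∀ t, a t ≤ m := fun t => le_sup' a (mem_univ t)
  have hm : 0 ≤ m := (ha _).trans (ham ⟨0, hT⟩)
  have hb : ∀ i, 0 ≤ zeroExtend a i := fun i => by
    unfold zeroExtend; split_ifs <;> simp [ha]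
  have hbm : ∀ i, zeroExtend a i ≤ m := fun i => by
    unfold zeroExtend; split_ifs <;> simp [ham, hm]
  have hbound := sum_range_div_sqrt_one_add_partialSum_le (zeroExtend a) hb hbm T
  have hlhs : ∑ t : Fin T, a t / √(1 + ∑ s ∈ univ.filter (fun s => s < t), a s) =
      ∑ i ∈ range T, zeroExtend a i / √(1 + ∑ j ∈ range i, zeroExtend a j) := by
    rw [← Fin.sum_univ_eq_sum_range
      (fun i => zeroExtend a i / √(1 + ∑ j ∈ range i, zeroExtend a j))]
    simp only [zeroExtend_val, sum_filter_lt_eq_sum_range_zeroExtend]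
  rw [hlhs, sum_univ_eq_sum_range_zeroExtend]
  linarith [Real.sqrt_nonneg (∑ i ∈ range T, zeroExtend a i)]
end

section
/- Let V be a finite set of K ≥ 2 vertices, let z : V → ℝ₊ satisfy ∑_{i∈V} z_i ≤ 1 and z_i ≥ β for all i, where β ∈ (0, 1/2]. Let G = (V, E) be a directed graph with all self-loops and edge probabilities p(i,j) ∈ [0,1], let ρ = min_{i∈V} ∑_{j∈C^in(i)} p(j,i) > 0, let w⁻_i = (min_{j∈C^in(i)} p(j,i))⁻¹ and w⁺_i = (min_{j∈C^out(i)} p(i,j))⁻¹ (minima over edges in E). Then ∑_{i∈V} z_i / (∑_{j∈C^in(i)} z_j · p(j,i)) ≤ 6·(α_w(G, w⁻) + α_w(G, w⁺))·ln(2K²/(β·ρ)). -/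
open Finset

/-- a set of vertices is independent in a directed graph, ignoring orientation. -/
def IsIndepSet {V : Type*} (E : V → V → Prop) (S : Finset V) : Prop :=
  ∀ i ∈ S, ∀ j ∈ S, i ≠ j → ¬ E i j ∧ ¬ E j i

/-- the weighted independence number of a directed graph. -/
noncomputable def weightedIndepNum {V : Type*} [Fintype V]
    (E : V → V → Prop) (w : V → ℝ) : ℝ :=
  sSup {x | ∃ S : Finset V, IsIndepSet E S ∧ x = ∑ i ∈ S, w i}

/-!
Write `D_U(v) = ∑_{u ∈ C^in_U(v)} z_u p(u,v)` for the inflow into `v` inside `U ⊆ V`, and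
`A = α_w(G, w⁻) + α_w(G, w⁺)`. Every edge has `p(u,v) ≥ (minIn v + minOut u) / 2`, so after
swapping the double sum over edges, `2 ∑_v z_v D_U(v) ≥ ∑_v z_v z(N_U[v]) / (w⁻_v + w⁺_v)`,
where `N_U[v]` is the closed undirected neighbourhood. By Cauchy–Schwarz and the weighted
Caro–Wei bound `∑_v (w⁻_v + w⁺_v) z_v / z(N_U[v]) ≤ A`, this is at least `z(U)² / A`, so some
`v ∈ U` has `D_U(v) ≥ z(U) / (2A)`. Peeling such vertices off one at a time bounds the sum by
`2A (1 + log (z(V) / β))`, which is at most `6A log (2K² / (βρ))`.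
-/

section

variable {V : Type*}

theorem IsIndepSet.singleton (E : V → V → Prop) (v : V) : IsIndepSet E {v} := by
  intro i hi j hj hij
  simp_all

theorem IsIndepSet.insert [DecidableEq V] {E : V → V → Prop} {S : Finset V}
    (hS : IsIndepSet E S) {v : V} (hv : ∀ u ∈ S, ¬ (E u v ∨ E v u)) :
    IsIndepSet E (insert v S) := by
  intro i hi j hj hij
  rw [mem_insert] at hi hj
  rcases hi with rfl | hi <;> rcases hj with rfl | hj
  · exact absurd rfl hij
  · have := hv j hj; tauto
  · have := hv i hi; tauto
  · exact hS i hi j hj hij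

theorem IsIndepSet.sum_le_weightedIndepNum [Fintype V] {E : V → V → Prop} {S : Finset V}
    (hS : IsIndepSet E S) (w : V → ℝ) : ∑ i ∈ S, w i ≤ weightedIndepNum E w := by
  refine le_csSup ((Set.finite_range fun T : Finset V => ∑ i ∈ T, w i).subset ?_).bddAbove
    ⟨S, hS, rfl⟩
  rintro _ ⟨T, -, rfl⟩
  exact ⟨T, rfl⟩

section Neighbourhoods

variable (E : V → V → Prop) [DecidableRel E]

def inNbhd (U : Finset V) (v : V) : Finset V := U.filter fun u => E u v

def outNbhd (U : Finset V) (v : V) : Finset V := U.filter fun u => E v u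

def closedNbhd (U : Finset V) (v : V) : Finset V := U.filter fun u => E u v ∨ E v u

variable {E}

theorem mem_inNbhd {U : Finset V} {u v : V} : u ∈ inNbhd E U v ↔ u ∈ U ∧ E u v := mem_filter

theorem mem_outNbhd {U : Finset V} {u v : V} : u ∈ outNbhd E U v ↔ u ∈ U ∧ E v u := mem_filter

theorem mem_closedNbhd {U : Finset V} {u v : V} :
    u ∈ closedNbhd E U v ↔ u ∈ U ∧ (E u v ∨ E v u) := mem_filter

theorem closedNbhd_subset_union [DecidableEq V] (U : Finset V) (v : V) :
    closedNbhd E U v ⊆ inNbhd E U v ∪ outNbhd E U v := by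
  intro u
  simp only [mem_closedNbhd, mem_union, mem_inNbhd, mem_outNbhd]
  tauto

theorem sum_sum_inNbhd_eq_sum_sum_outNbhd (U : Finset V) (f : V → V → ℝ) :
    ∑ v ∈ U, ∑ u ∈ inNbhd E U v, f u v = ∑ u ∈ U, ∑ v ∈ outNbhd E U u, f u v :=
  sum_comm' fun v u => by simp only [mem_inNbhd, mem_outNbhd]; tauto

/-- Weighted Caro–Wei bound. -/
theorem sum_mul_div_sum_closedNbhd_le (hloop : ∀ i, E i i) {μ w : V → ℝ}
    (hμ : ∀ v, 0 < μ v) (hw : ∀ v, 0 ≤ w v) (U : Finset V) {A : ℝ}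
    (hA : ∀ S ⊆ U, IsIndepSet E S → ∑ i ∈ S, w i ≤ A) :
    ∑ v ∈ U, w v * μ v / ∑ u ∈ closedNbhd E U v, μ u ≤ A := by
  classical
  induction U using Finset.strongInduction generalizing A with
  | H U ih =>
  rcases U.eq_empty_or_nonempty with rfl | hU
  · simpa using hA ∅ (empty_subset _) (by simp [IsIndepSet])
  have hself : ∀ {U : Finset V} {v}, v ∈ U → v ∈ closedNbhd E U v := fun hv =>
    mem_closedNbhd.2 ⟨hv, .inl (hloop _)⟩
  have hpos : ∀ {U : Finset V} {v}, v ∈ U → 0 < ∑ u ∈ closedNbhd E U v, μ u := fun hv =>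
    sum_pos' (fun u _ => (hμ u).le) ⟨_, hself hv, hμ _⟩
  obtain ⟨v₀, hv₀, hmax⟩ :=
    U.exists_max_image (fun v => w v / ∑ u ∈ closedNbhd E U v, μ u) hU
  set N := closedNbhd E U v₀
  have hNU : N ⊆ U := filter_subset _ _
  -- by maximality of `v₀`, the terms indexed by `N` add up to at most `w v₀`
  have hN : ∑ v ∈ N, w v * μ v / ∑ u ∈ closedNbhd E U v, μ u ≤ w v₀ :=
    calc ∑ v ∈ N, w v * μ v / ∑ u ∈ closedNbhd E U v, μ u
        ≤ ∑ v ∈ N, w v₀ / (∑ u ∈ N, μ u) * μ v := sum_le_sum fun v hv => by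
          rw [mul_div_right_comm]
          exact mul_le_mul_of_nonneg_right (hmax v (hNU hv)) (hμ v).le
      _ = w v₀ := by rw [← mul_sum, div_mul_cancel₀ _ (hpos hv₀).ne']
  have hrest : ∑ v ∈ U \ N, w v * μ v / ∑ u ∈ closedNbhd E U v, μ u ≤ A - w v₀ := by
    refine (sum_le_sum fun v hv => ?_).trans (ih (U \ N) (sdiff_ssubset hNU ⟨v₀, hself hv₀⟩)
      fun S hS hSind => ?_)
    · exact div_le_div_of_nonneg_left (mul_nonneg (hw v) (hμ v).le) (hpos hv)
        (sum_le_sum_of_subset_of_nonneg (filter_subset_filter _ sdiff_subset)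
          fun u _ _ => (hμ u).le)
    · have hv₀S : v₀ ∉ S := fun h => (mem_sdiff.1 (hS h)).2 (hself hv₀)
      have hins := hA (insert v₀ S) (insert_subset hv₀ (hS.trans sdiff_subset))
        (hSind.insert fun u hu h => (mem_sdiff.1 (hS hu)).2
          (mem_closedNbhd.2 ⟨(mem_sdiff.1 (hS hu)).1, h⟩))
      rw [sum_insert hv₀S] at hins
      linarith
  rw [← sum_sdiff hNU]
  linarith

end Neighbourhoods

theorem div_inv_add_inv_le {m o a b c : ℝ} (hm : 0 < m) (ho : 0 < o) (ha : 0 ≤ a) (hb : 0 ≤ b)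
    (hc : c ≤ a + b) : c / (m⁻¹ + o⁻¹) ≤ m * a + o * b := by
  rw [div_le_iff₀ (by positivity)]
  have : (m * a + o * b) * (m⁻¹ + o⁻¹) = a + b + m / o * a + o / m * b := by
    field_simp
    ring
  rw [this]
  have : 0 ≤ m / o * a + o / m * b := by positivity
  linarith

theorem sub_div_add_log_div_le_log_div {Z Z' β : ℝ} (hZ' : 0 < Z') (hZ'Z : Z' ≤ Z) (hβ : 0 < β) :
    (Z - Z') / Z + Real.log (Z' / β) ≤ Real.log (Z / β) := by
  have hZ : 0 < Z := hZ'.trans_le hZ'Z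
  have h := Real.one_sub_inv_le_log_of_pos (div_pos hZ hZ')
  rw [inv_div, Real.log_div hZ.ne' hZ'.ne'] at h
  rw [Real.log_div hZ.ne' hβ.ne', Real.log_div hZ'.ne' hβ.ne', sub_div, div_self hZ.ne']
  linarith

/-- Greedy peeling: removing a vertex `v` with `z(U) ≤ c f U v` costs at most
`c z_v / z(U) ≤ c (log z(U) - log (z(U) - z_v))`. -/
theorem sum_div_le_mul_one_add_log {z : V → ℝ} {β c : ℝ} (hβ : 0 < β) (hzβ : ∀ i, β ≤ z i)
    {f : Finset V → V → ℝ} (hf : ∀ U, ∀ v ∈ U, 0 < f U v)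
    (hmono : ∀ U U', U' ⊆ U → ∀ v ∈ U', f U' v ≤ f U v)
    (hgood : ∀ U : Finset V, U.Nonempty → ∃ v ∈ U, ∑ u ∈ U, z u ≤ c * f U v)
    (U : Finset V) (hU : U.Nonempty) :
    ∑ v ∈ U, z v / f U v ≤ c * (1 + Real.log ((∑ u ∈ U, z u) / β)) := by
  classical
  have hz : ∀ i, 0 < z i := fun i => hβ.trans_le (hzβ i)
  induction U using Finset.strongInduction with
  | H U ih =>
  obtain ⟨v₀, hv₀, hgood₀⟩ := hgood U hU
  set Z := ∑ u ∈ U, z u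
  have hZ : 0 < Z := sum_pos (fun i _ => hz i) hU
  have hzZ : z v₀ ≤ Z := single_le_sum (fun i _ => (hz i).le) hv₀
  have hc : 0 < c := pos_of_mul_pos_left (hZ.trans_le hgood₀) (hf U v₀ hv₀).le
  have hlog : 0 ≤ Real.log (Z / β) :=
    Real.log_nonneg ((one_le_div hβ).2 ((hzβ v₀).trans hzZ))
  have hhead : z v₀ / f U v₀ ≤ c * (z v₀ / Z) := by
    rw [div_le_iff₀ (hf U v₀ hv₀), mul_div_assoc', div_mul_eq_mul_div, le_div_iff₀ hZ]
    nlinarith [hz v₀]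
  rw [← add_sum_erase U _ hv₀]
  rcases (U.erase v₀).eq_empty_or_nonempty with hem | hne
  · rw [hem, sum_empty, add_zero]
    calc z v₀ / f U v₀ ≤ c * (z v₀ / Z) := hhead
      _ ≤ c * (1 + Real.log (Z / β)) := by
        gcongr
        linarith [(div_le_one hZ).2 hzZ]
  have htail : ∑ v ∈ U.erase v₀, z v / f U v
      ≤ c * (1 + Real.log ((∑ u ∈ U.erase v₀, z u) / β)) :=
    (sum_le_sum fun v hv => div_le_div_of_nonneg_left (hz v).le (hf _ v hv)
      (hmono U _ (erase_subset _ _) v hv)).trans (ih _ (erase_ssubset hv₀) hne)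
  have hstep := sub_div_add_log_div_le_log_div (sum_pos (fun i _ => hz i) hne)
    (sum_le_sum_of_subset_of_nonneg (erase_subset v₀ U) fun i _ _ => (hz i).le) hβ
  rw [sum_erase_eq_sub hv₀, sub_sub_cancel, ← sum_erase_eq_sub hv₀] at hstep
  nlinarith [mul_le_mul_of_nonneg_left hstep hc.le]

section Inflow

variable {E : V → V → Prop} [DecidableRel E] {p : V → V → ℝ} {z minIn minOut : V → ℝ}

variable (E p z) in
def inflow (U : Finset V) (v : V) : ℝ := ∑ u ∈ inNbhd E U v, z u * p u v

theorem mul_pos_of_mem_inNbhd (hz : ∀ i, 0 < z i) (hIn : ∀ i, 0 < minIn i)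
    (hpIn : ∀ i j, E j i → minIn i ≤ p j i) {U : Finset V} {u v : V}
    (hu : u ∈ inNbhd E U v) : 0 < z u * p u v :=
  mul_pos (hz u) ((hIn v).trans_le (hpIn v u (mem_inNbhd.1 hu).2))

theorem inflow_pos (hloop : ∀ i, E i i) (hz : ∀ i, 0 < z i) (hIn : ∀ i, 0 < minIn i)
    (hpIn : ∀ i j, E j i → minIn i ≤ p j i) {U : Finset V} {v : V} (hv : v ∈ U) :
    0 < inflow E p z U v :=
  sum_pos (fun _ hu => mul_pos_of_mem_inNbhd hz hIn hpIn hu) ⟨v, mem_inNbhd.2 ⟨hv, hloop v⟩⟩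

theorem inflow_mono (hz : ∀ i, 0 < z i) (hIn : ∀ i, 0 < minIn i)
    (hpIn : ∀ i j, E j i → minIn i ≤ p j i) {U U' : Finset V} (h : U' ⊆ U) (v : V) :
    inflow E p z U' v ≤ inflow E p z U v :=
  sum_le_sum_of_subset_of_nonneg (filter_subset_filter _ h) fun _ hu _ =>
    (mul_pos_of_mem_inNbhd hz hIn hpIn hu).le

/-- An edge `(u, v)` has `p u v ≥ (minIn v + minOut u) / 2`. -/
theorem minIn_mul_add_le_two_mul_inflow (hz : ∀ i, 0 < z i)
    (hpIn : ∀ i j, E j i → minIn i ≤ p j i) (hpOut : ∀ i j, E i j → minOut i ≤ p i j)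
    (U : Finset V) (v : V) :
    minIn v * ∑ u ∈ inNbhd E U v, z u + ∑ u ∈ inNbhd E U v, z u * minOut u ≤
      2 * inflow E p z U v := by
  rw [mul_sum, ← sum_add_distrib, inflow, mul_sum]
  refine sum_le_sum fun u hu => ?_
  have huv := (mem_inNbhd.1 hu).2
  nlinarith [hpIn v u huv, hpOut u v huv, (hz u).le]

theorem mul_sum_closedNbhd_div_le [DecidableEq V] (hz : ∀ i, 0 < z i) (hIn : ∀ i, 0 < minIn i)
    (hOut : ∀ i, 0 < minOut i) (U : Finset V) (v : V) :
    z v * (∑ u ∈ closedNbhd E U v, z u) / ((minIn v)⁻¹ + (minOut v)⁻¹) ≤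
      minIn v * z v * ∑ u ∈ inNbhd E U v, z u + minOut v * z v * ∑ u ∈ outNbhd E U v, z u := by
  have hz0 : ∀ i, 0 ≤ z i := fun i => (hz i).le
  have hN : ∑ u ∈ closedNbhd E U v, z u ≤
      ∑ u ∈ inNbhd E U v, z u + ∑ u ∈ outNbhd E U v, z u := by
    rw [← sum_union_inter]
    exact (sum_le_sum_of_subset_of_nonneg (closedNbhd_subset_union U v) fun i _ _ => hz0 i).trans
      (le_add_of_nonneg_right (sum_nonneg fun i _ => hz0 i))
  rw [mul_assoc, mul_assoc]
  exact div_inv_add_inv_le (hIn v) (hOut v) (mul_nonneg (hz0 v) (sum_nonneg fun i _ => hz0 i))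
    (mul_nonneg (hz0 v) (sum_nonneg fun i _ => hz0 i)) (by rw [← mul_add]; gcongr; exact hz0 v)

/-- Cauchy–Schwarz (in Sedrakyan's form) against the weighted Caro–Wei bound. -/
theorem sq_sum_le_mul_sum_mul_sum_closedNbhd_div (hloop : ∀ i, E i i) (hz : ∀ i, 0 < z i)
    {w : V → ℝ} (hw : ∀ i, 0 < w i) {U : Finset V} (hU : U.Nonempty) {A : ℝ}
    (hA : ∀ S ⊆ U, IsIndepSet E S → ∑ i ∈ S, w i ≤ A) :
    (∑ v ∈ U, z v) ^ 2 ≤ A * ∑ v ∈ U, z v * (∑ u ∈ closedNbhd E U v, z u) / w v := by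
  have hN : ∀ v ∈ U, 0 < ∑ u ∈ closedNbhd E U v, z u := fun v hv =>
    sum_pos' (fun u _ => (hz u).le) ⟨v, mem_closedNbhd.2 ⟨hv, .inl (hloop v)⟩, hz v⟩
  have hg : ∀ v ∈ U, 0 < z v * (∑ u ∈ closedNbhd E U v, z u) / w v := fun v hv =>
    div_pos (mul_pos (hz v) (hN v hv)) (hw v)
  have hT := sq_sum_div_le_sum_sq_div U z hg
  have hCW := sum_mul_div_sum_closedNbhd_le hloop hz (fun v => (hw v).le) U hA
  rw [sum_congr rfl fun v hv => show z v ^ 2 / (z v * (∑ u ∈ closedNbhd E U v, z u) / w v) =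
      w v * z v / ∑ u ∈ closedNbhd E U v, z u by
    field_simp [(hz v).ne', (hN v hv).ne', (hw v).ne']] at hT
  rw [div_le_iff₀ (sum_pos hg hU)] at hT
  exact hT.trans (mul_le_mul_of_nonneg_right hCW (sum_nonneg fun v hv => (hg v hv).le))

theorem sq_sum_le_two_mul_sum_mul_inflow (hloop : ∀ i, E i i) (hz : ∀ i, 0 < z i)
    (hIn : ∀ i, 0 < minIn i) (hOut : ∀ i, 0 < minOut i)
    (hpIn : ∀ i j, E j i → minIn i ≤ p j i) (hpOut : ∀ i j, E i j → minOut i ≤ p i j)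
    {U : Finset V} (hU : U.Nonempty) {A : ℝ}
    (hA : ∀ S ⊆ U, IsIndepSet E S → ∑ i ∈ S, ((minIn i)⁻¹ + (minOut i)⁻¹) ≤ A) :
    (∑ v ∈ U, z v) ^ 2 ≤ 2 * A * ∑ v ∈ U, z v * inflow E p z U v := by
  classical
  obtain ⟨v₁, hv₁⟩ := hU
  have hA0 : 0 ≤ A := by
    have h := hA {v₁} (singleton_subset_iff.2 hv₁) (IsIndepSet.singleton E v₁)
    rw [sum_singleton] at h
    have := inv_pos.2 (hIn v₁)
    have := inv_pos.2 (hOut v₁)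
    linarith
  have hCS := sq_sum_le_mul_sum_mul_sum_closedNbhd_div hloop hz
    (fun i => add_pos (inv_pos.2 (hIn i)) (inv_pos.2 (hOut i))) ⟨v₁, hv₁⟩ hA
  have hsplit := sum_le_sum fun v (_ : v ∈ U) => mul_sum_closedNbhd_div_le (E := E) hz hIn hOut U v
  have hswap : ∑ v ∈ U, minOut v * z v * ∑ u ∈ outNbhd E U v, z u =
      ∑ v ∈ U, z v * ∑ u ∈ inNbhd E U v, z u * minOut u := by
    simp only [mul_sum]
    rw [sum_sum_inNbhd_eq_sum_sum_outNbhd]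
    exact sum_congr rfl fun _ _ => sum_congr rfl fun _ _ => by ring
  have hpair : ∑ v ∈ U, (minIn v * z v * ∑ u ∈ inNbhd E U v, z u +
      z v * ∑ u ∈ inNbhd E U v, z u * minOut u) ≤ 2 * ∑ v ∈ U, z v * inflow E p z U v := by
    rw [mul_sum]
    refine sum_le_sum fun v _ => ?_
    have := mul_le_mul_of_nonneg_left (minIn_mul_add_le_two_mul_inflow hz hpIn hpOut U v)
      (hz v).le
    linarith
  rw [sum_add_distrib, hswap, ← sum_add_distrib] at hsplit
  calc (∑ v ∈ U, z v) ^ 2 ≤ A * 2 * ∑ v ∈ U, z v * inflow E p z U v := by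
        rw [mul_assoc]
        exact hCS.trans (mul_le_mul_of_nonneg_left (hsplit.trans hpair) hA0)
    _ = 2 * A * ∑ v ∈ U, z v * inflow E p z U v := by ring

theorem exists_le_two_mul_inflow (hloop : ∀ i, E i i) (hz : ∀ i, 0 < z i)
    (hIn : ∀ i, 0 < minIn i) (hOut : ∀ i, 0 < minOut i)
    (hpIn : ∀ i j, E j i → minIn i ≤ p j i) (hpOut : ∀ i j, E i j → minOut i ≤ p i j)
    {U : Finset V} (hU : U.Nonempty) {A : ℝ}
    (hA : ∀ S ⊆ U, IsIndepSet E S → ∑ i ∈ S, ((minIn i)⁻¹ + (minOut i)⁻¹) ≤ A) :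
    ∃ v ∈ U, ∑ u ∈ U, z u ≤ 2 * A * inflow E p z U v := by
  obtain ⟨v, hv, hle⟩ := exists_le_of_sum_le hU <|
    calc ∑ v ∈ U, z v * ∑ u ∈ U, z u = (∑ v ∈ U, z v) ^ 2 := by rw [← sum_mul, sq]
      _ ≤ 2 * A * ∑ v ∈ U, z v * inflow E p z U v :=
        sq_sum_le_two_mul_sum_mul_inflow hloop hz hIn hOut hpIn hpOut hU hA
      _ = ∑ v ∈ U, z v * (2 * A * inflow E p z U v) := by
        rw [mul_sum]
        exact sum_congr rfl fun _ _ => by ring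
  exact ⟨v, hv, le_of_mul_le_mul_left hle (hz v)⟩

theorem sum_div_inflow_le (hloop : ∀ i, E i i) {β : ℝ} (hβ : 0 < β) (hzβ : ∀ i, β ≤ z i)
    (hIn : ∀ i, 0 < minIn i) (hOut : ∀ i, 0 < minOut i)
    (hpIn : ∀ i j, E j i → minIn i ≤ p j i) (hpOut : ∀ i j, E i j → minOut i ≤ p i j)
    {A : ℝ} (hA : ∀ S, IsIndepSet E S → ∑ i ∈ S, ((minIn i)⁻¹ + (minOut i)⁻¹) ≤ A)
    {U : Finset V} (hU : U.Nonempty) :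
    ∑ v ∈ U, z v / inflow E p z U v ≤ 2 * A * (1 + Real.log ((∑ u ∈ U, z u) / β)) :=
  have hz : ∀ i, 0 < z i := fun i => hβ.trans_le (hzβ i)
  sum_div_le_mul_one_add_log hβ hzβ (fun _ _ hv => inflow_pos hloop hz hIn hpIn hv)
    (fun _ _ h v _ => inflow_mono hz hIn hpIn h v)
    (fun _ hU => exists_le_two_mul_inflow hloop hz hIn hOut hpIn hpOut hU fun S _ => hA S) U hU

end Inflow

end

theorem one_add_log_div_le_three_mul_log {Z β ρ K : ℝ} (hβ : 0 < β) (hβZ : β ≤ Z) (hZ : Z ≤ 1)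
    (hρ : 0 < ρ) (hρK : ρ ≤ K) (hK : 1 ≤ K) :
    1 + Real.log (Z / β) ≤ 3 * Real.log (2 * K ^ 2 / (β * ρ)) := by
  have hZβ : Real.log (Z / β) ≤ Real.log (1 / β) :=
    Real.log_le_log (div_pos (hβ.trans_le hβZ) hβ) (div_le_div_of_nonneg_right hZ hβ.le)
  have hKρ : Real.log (2 / β) ≤ Real.log (2 * K ^ 2 / (β * ρ)) := by
    refine Real.log_le_log (by positivity) ?_
    rw [div_le_div_iff₀ hβ (by positivity)]
    have hρK2 : ρ ≤ K ^ 2 := hρK.trans (by nlinarith)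
    nlinarith [mul_le_mul_of_nonneg_left hρK2 hβ.le]
  rw [div_eq_mul_one_div 2 β, Real.log_mul two_ne_zero (by positivity)] at hKρ
  have hβ1 : 0 ≤ Real.log (1 / β) := Real.log_nonneg ((one_le_div hβ).2 (hβZ.trans hZ))
  linarith [Real.log_two_gt_d9]

theorem stmt_14_general {V : Type*} [Fintype V] (K : ℕ)
    (hK : Fintype.card V = K)
    (E : V → V → Prop) [DecidableRel E] (hloop : ∀ i, E i i)
    (p : V → V → ℝ) (hp : ∀ i j, 0 ≤ p i j ∧ p i j ≤ 1)
    (z : V → ℝ) (β : ℝ) (hβ0 : 0 < β)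
    (hz1 : ∑ i, z i ≤ 1) (hzβ : ∀ i, β ≤ z i)
    (ρ : ℝ) (hρpos : 0 < ρ)
    (hρ : IsLeast {x | ∃ i, x = ∑ j ∈ Finset.univ.filter (fun j => E j i), p j i} ρ)
    (minIn minOut : V → ℝ)
    (hmin : ∀ i, IsLeast {x | ∃ j, E j i ∧ x = p j i} (minIn i))
    (hmout : ∀ i, IsLeast {x | ∃ j, E i j ∧ x = p i j} (minOut i))
    (hminpos : ∀ i, 0 < minIn i) (hmoutpos : ∀ i, 0 < minOut i) :
    ∑ i, z i / (∑ j ∈ Finset.univ.filter (fun j => E j i), z j * p j i) ≤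
      6 * (weightedIndepNum E (fun i => (minIn i)⁻¹) +
            weightedIndepNum E (fun i => (minOut i)⁻¹)) *
        Real.log (2 * (K : ℝ) ^ 2 / (β * ρ)) := by
  classical
  obtain ⟨i₀, hρi₀⟩ := hρ.1
  set A := weightedIndepNum E (fun i => (minIn i)⁻¹) + weightedIndepNum E (fun i => (minOut i)⁻¹)
  have hA : ∀ S, IsIndepSet E S → ∑ i ∈ S, ((minIn i)⁻¹ + (minOut i)⁻¹) ≤ A := fun S hS => by
    rw [sum_add_distrib]
    exact add_le_add (hS.sum_le_weightedIndepNum _) (hS.sum_le_weightedIndepNum _)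
  have hA0 : 0 ≤ A := by
    have h := hA {i₀} (IsIndepSet.singleton E i₀)
    rw [sum_singleton] at h
    linarith [inv_pos.2 (hminpos i₀), inv_pos.2 (hmoutpos i₀)]
  have hρK : ρ ≤ K := by
    rw [hρi₀, ← hK, Fintype.card_eq_sum_ones, Nat.cast_sum, Nat.cast_one]
    exact (sum_le_sum fun j _ => (hp j i₀).2).trans
      (sum_le_sum_of_subset_of_nonneg (filter_subset _ _) fun _ _ _ => zero_le_one)
  have hK1 : (1 : ℝ) ≤ K := by
    rw [← hK]
    exact_mod_cast Fintype.card_pos_iff.2 ⟨i₀⟩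
  calc ∑ i, z i / (∑ j ∈ Finset.univ.filter (fun j => E j i), z j * p j i)
      ≤ 2 * A * (1 + Real.log ((∑ u, z u) / β)) :=
        sum_div_inflow_le hloop hβ0 hzβ hminpos hmoutpos (fun i j h => (hmin i).2 ⟨j, h, rfl⟩)
          (fun i j h => (hmout i).2 ⟨j, h, rfl⟩) hA ⟨i₀, mem_univ i₀⟩
    _ ≤ 2 * A * (3 * Real.log (2 * (K : ℝ) ^ 2 / (β * ρ))) := by
        gcongr
        exact one_add_log_div_le_three_mul_log hβ0
          ((hzβ i₀).trans (single_le_sum (fun i _ => hβ0.le.trans (hzβ i)) (mem_univ i₀))) hz1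
          hρpos hρK hK1
    _ = 6 * A * Real.log (2 * (K : ℝ) ^ 2 / (β * ρ)) := by ring

theorem stmt_14 {V : Type*} [Fintype V] [DecidableEq V] (K : ℕ)
    (hK : Fintype.card V = K) (hK2 : 2 ≤ K)
    (E : V → V → Prop) [DecidableRel E] (hloop : ∀ i, E i i)
    (p : V → V → ℝ) (hp : ∀ i j, 0 ≤ p i j ∧ p i j ≤ 1)
    (z : V → ℝ) (β : ℝ) (hβ0 : 0 < β) (hβ : β ≤ 1 / 2)
    (hz1 : ∑ i, z i ≤ 1) (hzβ : ∀ i, β ≤ z i)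
    (ρ : ℝ) (hρpos : 0 < ρ)
    (hρ : IsLeast {x | ∃ i, x = ∑ j ∈ Finset.univ.filter (fun j => E j i), p j i} ρ)
    (minIn minOut : V → ℝ)
    (hmin : ∀ i, IsLeast {x | ∃ j, E j i ∧ x = p j i} (minIn i))
    (hmout : ∀ i, IsLeast {x | ∃ j, E i j ∧ x = p i j} (minOut i))
    (hminpos : ∀ i, 0 < minIn i) (hmoutpos : ∀ i, 0 < minOut i) :
    ∑ i, z i / (∑ j ∈ Finset.univ.filter (fun j => E j i), z j * p j i) ≤
      6 * (weightedIndepNum E (fun i => (minIn i)⁻¹) +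
            weightedIndepNum E (fun i => (minOut i)⁻¹)) *
        Real.log (2 * (K : ℝ) ^ 2 / (β * ρ)) :=
  stmt_14_general K hK E hloop p hp z β hβ0 hz1 hzβ ρ hρpos hρ minIn minOut hmin hmout hminpos
    hmoutpos
end

section
/- Let G = (V, E) be a directed graph with all self-loops, with edge probabilities p(i,j) ∈ [0,1], and let G' be its undirected version with symmetrized probabilities p'(i,j) = (p(i,j) + p(j,i))/2. Define w'_i = (|C(i)|⁻¹·∑_{j∈C(i)} p'(j,i))⁻¹ where C(i) = C^in(i) ∪ C^out(i), and w^in_i, w^out_i as the reciprocals of the average incoming and outgoing probabilities over C^in(i) and C^out(i), respectively. Then for every vertex i, w'_i ≤ 2·(w^in_i + w^out_i). -/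
open Finset

/-- closed in-neighborhood. -/
def Cin {V : Type*} [Fintype V] [DecidableEq V]
    (E : V → V → Prop) [DecidableRel E] (i : V) : Finset V :=
  insert i (Finset.univ.filter (fun j => E j i))

/-- closed out-neighborhood. -/
def Cout {V : Type*} [Fintype V] [DecidableEq V]
    (E : V → V → Prop) [DecidableRel E] (i : V) : Finset V :=
  insert i (Finset.univ.filter (fun j => E i j))

/-!
Write `S` for the sum of the symmetrized probabilities over `C(i) = C^in(i) ∪ C^out(i)`.
Since `C^in(i) ⊆ C(i)` and all probabilities are nonnegative, `2 S` dominates both the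
incoming sum over `C^in(i)` and the outgoing sum over `C^out(i)`. Together with
`|C(i)| ≤ |C^in(i)| + |C^out(i)|` this gives
`|C(i)| / S ≤ |C^in(i)| / S + |C^out(i)| / S ≤ 2 |C^in(i)| / Σ_in + 2 |C^out(i)| / Σ_out`.
-/

section SumUnion

variable {ι M : Type*} [DecidableEq ι] [AddCommMonoid M] [PartialOrder M]
  [IsOrderedAddMonoid M] {s t : Finset ι} {f g : ι → M}

theorem Finset.sum_le_sum_union_add_left (hf : ∀ j, 0 ≤ f j) (hg : ∀ j, 0 ≤ g j) :
    ∑ j ∈ s, f j ≤ ∑ j ∈ s ∪ t, (f j + g j) :=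
  calc ∑ j ∈ s, f j ≤ ∑ j ∈ s, (f j + g j) := sum_le_sum fun j _ => le_add_of_nonneg_right (hg j)
    _ ≤ ∑ j ∈ s ∪ t, (f j + g j) :=
      sum_le_sum_of_subset_of_nonneg subset_union_left fun j _ _ => add_nonneg (hf j) (hg j)

theorem Finset.sum_le_sum_union_add_right (hf : ∀ j, 0 ≤ f j) (hg : ∀ j, 0 ≤ g j) :
    ∑ j ∈ t, g j ≤ ∑ j ∈ s ∪ t, (f j + g j) := by
  simpa only [union_comm, add_comm] using sum_le_sum_union_add_left (s := t) (t := s) hg hf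

end SumUnion

theorem div_le_two_mul_add_div {n m k a b s : ℝ} (hm : 0 ≤ m) (hk : 0 ≤ k) (ha : 0 < a)
    (hb : 0 < b) (hn : n ≤ m + k) (has : a ≤ 2 * s) (hbs : b ≤ 2 * s) :
    n / s ≤ 2 * (m / a + k / b) := by
  have hs : 0 < s := by linarith
  calc n / s ≤ m / s + k / s := by rw [← add_div]; gcongr
    _ ≤ m / (a / 2) + k / (b / 2) := by gcongr <;> linarith
    _ = 2 * (m / a + k / b) := by field_simp

theorem stmt_16_general {V : Type*} [Fintype V] [DecidableEq V]
    (E : V → V → Prop) [DecidableRel E]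
    (p : V → V → ℝ) (hp : ∀ i j, 0 ≤ p i j ∧ p i j ≤ 1)
    (hposIn : ∀ i, 0 < ∑ j ∈ Cin E i, p j i)
    (hposOut : ∀ i, 0 < ∑ j ∈ Cout E i, p i j) :
    ∀ i : V,
      ((Cin E i ∪ Cout E i).card : ℝ) / (∑ j ∈ Cin E i ∪ Cout E i, (p j i + p i j) / 2) ≤
        2 * (((Cin E i).card : ℝ) / (∑ j ∈ Cin E i, p j i) +
              ((Cout E i).card : ℝ) / (∑ j ∈ Cout E i, p i j)) := by
  intro i
  have hin : ∀ j, 0 ≤ p j i := fun j => (hp j i).1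
  have hout : ∀ j, 0 ≤ p i j := fun j => (hp i j).1
  have hsym : 2 * ∑ j ∈ Cin E i ∪ Cout E i, (p j i + p i j) / 2
      = ∑ j ∈ Cin E i ∪ Cout E i, (p j i + p i j) := by
    rw [← sum_div]; ring
  refine div_le_two_mul_add_div (by positivity) (by positivity) (hposIn i) (hposOut i)
    (mod_cast card_union_le _ _) ?_ ?_ <;> rw [hsym]
  · exact sum_le_sum_union_add_left hin hout
  · exact sum_le_sum_union_add_right hin hout

theorem stmt_16 {V : Type*} [Fintype V] [DecidableEq V]
    (E : V → V → Prop) [DecidableRel E] (hloop : ∀ i, E i i)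
    (p : V → V → ℝ) (hp : ∀ i j, 0 ≤ p i j ∧ p i j ≤ 1)
    (hposIn : ∀ i, 0 < ∑ j ∈ Cin E i, p j i)
    (hposOut : ∀ i, 0 < ∑ j ∈ Cout E i, p i j)
    (hpos : ∀ i, 0 < ∑ j ∈ Cin E i ∪ Cout E i, (p j i + p i j) / 2) :
    ∀ i : V,
      ((Cin E i ∪ Cout E i).card : ℝ) / (∑ j ∈ Cin E i ∪ Cout E i, (p j i + p i j) / 2) ≤
        2 * (((Cin E i).card : ℝ) / (∑ j ∈ Cin E i, p j i) +
              ((Cout E i).card : ℝ) / (∑ j ∈ Cout E i, p i j)) :=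
  stmt_16_general E p hp hposIn hposOut
end
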